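/- Let B be a complete Boolean algebra, U an ℵ₁-incomplete ultrafilter on B, and λ an infinite cardinal. Then U is λ-OK if and only if U is λ-flexible. -/

import Mathlib

/-!
Both sides ask for a multiplicative distribution in `U` below a given one, and the point is that
nonstandard names and cardinality-invariant distributions in `U` determine each other. A name `n`
gives the distribution `s ↦ ‖n ≥ |s|‖`. Conversely, for a cardinality-invariant `A`, let
`h k = (⨅_{|s| ≤ k} A s) ⊓ c k`, where `(c k)` witnesses ℵ₁-incompleteness with `c 0 = ⊤`:
it is a decreasing sequence in `U` with meet `⊥`, so the name taking the value `j` on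
`h j \ h (j + 1)` satisfies `‖n ≥ m‖ = h m ≤ A s` for `|s| = m`.
-/

universe u

section BA

variable {B : Type u} [CompleteBooleanAlgebra B]

/-- U is an ultrafilter on the complete Boolean algebra B. -/
def IsUltra (U : Set B) : Prop :=
  ⊤ ∈ U ∧ ⊥ ∉ U ∧ (∀ a ∈ U, ∀ b : B, a ≤ b → b ∈ U) ∧
    (∀ a ∈ U, ∀ b ∈ U, a ⊓ b ∈ U) ∧ ∀ a : B, a ∈ U ∨ aᶜ ∈ U

/-- c decides b if c ≤ b or c ≤ bᶜ. -/
def Decides (c b : B) : Prop := c ≤ b ∨ c ≤ bᶜ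

/-- A λ-distribution (with index set ι of cardinality λ): a map from finite subsets of λ to
the nonzero elements of B, sending ∅ to ⊤ and reversing inclusions. -/
def IsDistribution {ι : Type*} (A : Finset ι → B) : Prop :=
  (∀ s, A s ≠ ⊥) ∧ A ∅ = ⊤ ∧ ∀ s t : Finset ι, t ⊆ s → A s ≤ A t

/-- A distribution is multiplicative if A(s) = ⨅_{α∈s} A({α}). -/
def IsMultiplicative {ι : Type*} (A : Finset ι → B) : Prop :=
  ∀ s : Finset ι, A s = s.inf (fun α => A {α})

/-- A family (a_α)_{α<λ} is λ-regular: finite subfamilies have nonzero meet, infinite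
subfamilies have meet ⊥, and the nonzero elements deciding every a_α are dense in B₊. -/
def IsRegularFamily {ι : Type*} (a : ι → B) : Prop :=
  (∀ s : Finset ι, s.inf a ≠ ⊥) ∧
  (∀ X : Set ι, X.Infinite → (⨅ α ∈ X, a α) = ⊥) ∧
  (∀ b : B, b ≠ ⊥ → ∃ c : B, c ≠ ⊥ ∧ c ≤ b ∧ ∀ α : ι, Decides c (a α))

/-- A name for a natural number: a map n : ω → B with pairwise disjoint values
whose supremum is ⊤. -/
def IsName (nm : ℕ → B) : Prop :=
  (∀ i j : ℕ, i ≠ j → Disjoint (nm i) (nm j)) ∧ (⨆ m : ℕ, nm m) = ⊤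

/-- ‖n ≥ m‖ := ⨆_{j≥m} n(j). -/
def nameGe (nm : ℕ → B) (m : ℕ) : B := ⨆ j : ℕ, ⨆ _ : m ≤ j, nm j

/-- n is U-nonstandard if ‖n ≥ m‖ ∈ U for every m. -/
def IsNonstandardName (U : Set B) (nm : ℕ → B) : Prop := ∀ m : ℕ, nameGe nm m ∈ U

/-- U is ℵ₁-incomplete: some decreasing ω-sequence from U has infimum ⊥. -/
def Aleph1Incomplete (U : Set B) : Prop :=
  ∃ c : ℕ → B, (∀ k, c k ∈ U) ∧ Antitone c ∧ (⨅ k : ℕ, c k) = ⊥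


variable {B : Type u} [CompleteBooleanAlgebra B]

/-- U is λ-flexible (with index set ι of cardinality λ). -/
def IsFlexible (U : Set B) (ι : Type*) : Prop :=
  Aleph1Incomplete U ∧
    ∀ nm : ℕ → B, IsName nm → IsNonstandardName U nm →
      ∃ D : Finset ι → B, IsDistribution D ∧ (∀ s, D s ∈ U) ∧ IsMultiplicative D ∧
        ∀ s : Finset ι, D s ≤ nameGe nm s.card

/-- U is λ-OK (with index set ι of cardinality λ): every λ-distribution in U whose value
depends only on the cardinality of the input has a multiplicative refinement which is a
λ-distribution in U. -/
def IsOK (U : Set B) (ι : Type*) : Prop :=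
  ∀ A : Finset ι → B, IsDistribution A → (∀ s, A s ∈ U) →
    (∀ s t : Finset ι, s.card = t.card → A s = A t) →
    ∃ D : Finset ι → B, IsDistribution D ∧ (∀ s, D s ∈ U) ∧ IsMultiplicative D ∧
      ∀ s : Finset ι, D s ≤ A s

lemma le_nameGe (nm : ℕ → B) {m j : ℕ} (h : m ≤ j) : nm j ≤ nameGe nm m :=
  le_iSup₂_of_le j h le_rfl

lemma nameGe_le {nm : ℕ → B} {m : ℕ} {b : B} (h : ∀ j, m ≤ j → nm j ≤ b) : nameGe nm m ≤ b :=
  iSup₂_le h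

lemma nameGe_antitone (nm : ℕ → B) : Antitone (nameGe nm) :=
  fun _ _ hmk => nameGe_le fun _ hj => le_nameGe nm (hmk.trans hj)

lemma IsName.nameGe_zero {nm : ℕ → B} (hnm : IsName nm) : nameGe nm 0 = ⊤ :=
  top_unique <| hnm.2.symm.le.trans <| iSup_le fun j => le_nameGe nm j.zero_le

def nameOfAntitone (h : ℕ → B) (j : ℕ) : B := h j \ h (j + 1)

section NameOfAntitone

variable {h : ℕ → B}

lemma sdiff_le_nameGe_nameOfAntitone (hh : Antitone h) (m k : ℕ) :
    h m \ h k ≤ nameGe (nameOfAntitone h) m := by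
  induction k with
  | zero => simp [sdiff_eq_bot_iff.mpr (hh m.zero_le)]
  | succ k ih =>
    rcases le_or_gt (k + 1) m with hkm | hmk
    · simp [sdiff_eq_bot_iff.mpr (hh hkm)]
    · exact (sdiff_triangle _ (h k) _).trans <|
        sup_le ih (le_nameGe (nameOfAntitone h) (Nat.lt_succ_iff.mp hmk))

lemma nameGe_nameOfAntitone (hh : Antitone h) (hbot : ⨅ k, h k = ⊥) (m : ℕ) :
    nameGe (nameOfAntitone h) m = h m := by
  refine le_antisymm (nameGe_le fun j hj => sdiff_le.trans (hh hj)) ?_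
  calc h m = h m \ ⨅ k, h k := by rw [hbot, sdiff_bot]
    _ = ⨆ k, h m \ h k := sdiff_iInf_eq
    _ ≤ nameGe (nameOfAntitone h) m := iSup_le (sdiff_le_nameGe_nameOfAntitone hh m)

lemma disjoint_nameOfAntitone (hh : Antitone h) {i j : ℕ} (hij : i < j) :
    Disjoint (nameOfAntitone h i) (nameOfAntitone h j) :=
  disjoint_sdiff_self_left.mono_right (sdiff_le.trans (hh hij))

lemma isName_nameOfAntitone (hh : Antitone h) (h0 : h 0 = ⊤) (hbot : ⨅ k, h k = ⊥) :
    IsName (nameOfAntitone h) := by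
  refine ⟨fun i j hij => ?_, top_unique ?_⟩
  · rcases hij.lt_or_gt with hlt | hlt
    · exact disjoint_nameOfAntitone hh hlt
    · exact (disjoint_nameOfAntitone hh hlt).symm
  · calc ⊤ = nameGe (nameOfAntitone h) 0 := by rw [nameGe_nameOfAntitone hh hbot, h0]
      _ ≤ ⨆ j, nameOfAntitone h j := nameGe_le fun j _ => le_iSup _ j

end NameOfAntitone

lemma exists_finset_card_le_card (ι : Type*) (k : ℕ) :
    ∃ t : Finset ι, ∀ s : Finset ι, s.card ≤ k → s.card ≤ t.card := by
  classical
  obtain ⟨t, ht⟩ := Nat.findGreatest_spec (P := fun j => ∃ t : Finset ι, t.card = j)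
    k.zero_le ⟨∅, rfl⟩
  exact ⟨t, fun s hs => ht ▸ Nat.le_findGreatest hs ⟨s, rfl⟩⟩

section Distributions

variable {ι : Type*} {A : Finset ι → B}

lemma IsDistribution.le_of_card_le (hA : IsDistribution A)
    (hcard : ∀ s t : Finset ι, s.card = t.card → A s = A t) {s t : Finset ι}
    (hst : s.card ≤ t.card) : A t ≤ A s := by
  obtain ⟨t', ht't, hcard'⟩ := Finset.exists_subset_card_eq hst
  exact (hA.2.2 t t' ht't).trans (hcard t' s hcard').le

def infCardLE (A : Finset ι → B) (k : ℕ) : B := ⨅ (s : Finset ι) (_ : s.card ≤ k), A s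

lemma infCardLE_le {k : ℕ} {s : Finset ι} (hs : s.card ≤ k) : infCardLE A k ≤ A s :=
  iInf₂_le s hs

lemma infCardLE_antitone (A : Finset ι → B) : Antitone (infCardLE A) :=
  fun _ _ hjk => biInf_mono fun _ hs => hs.trans hjk

lemma IsDistribution.infCardLE_zero (hA : IsDistribution A) : infCardLE A 0 = ⊤ :=
  top_unique <| le_iInf₂ fun s hs => by
    rw [Finset.card_eq_zero.mp (Nat.le_zero.mp hs), hA.2.1]

lemma IsDistribution.infCardLE_mem {U : Set B} (hup : ∀ a ∈ U, ∀ b : B, a ≤ b → b ∈ U)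
    (hA : IsDistribution A) (hAU : ∀ s, A s ∈ U)
    (hcard : ∀ s t : Finset ι, s.card = t.card → A s = A t) (k : ℕ) : infCardLE A k ∈ U := by
  obtain ⟨t, ht⟩ := exists_finset_card_le_card ι k
  exact hup _ (hAU t) _ (le_iInf₂ fun s hs => hA.le_of_card_le hcard (ht s hs))

end Distributions

section Ultrafilters

variable {U : Set B} {ι : Type*}

lemma Aleph1Incomplete.exists_antitone_top (htop : ⊤ ∈ U) (hinc : Aleph1Incomplete U) :
    ∃ c : ℕ → B, (∀ k, c k ∈ U) ∧ Antitone c ∧ c 0 = ⊤ ∧ ⨅ k, c k = ⊥ := by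
  obtain ⟨c, hcU, hc, hbot⟩ := hinc
  have hsucc : ∀ k, ⨅ j < k + 1, c j = c k := fun k =>
    le_antisymm (iInf₂_le k k.lt_succ_self) (le_iInf₂ fun j hj => hc (Nat.lt_succ_iff.mp hj))
  refine ⟨fun k => ⨅ j < k, c j, fun k => ?_,
    fun i k hik => biInf_mono fun j hj => hj.trans_le hik, by simp, ?_⟩
  · cases k with
    | zero => simpa using htop
    | succ k => simpa only [hsucc] using hcU k
  · exact bot_unique <| hbot ▸ le_iInf fun k => (iInf_le _ (k + 1)).trans (hsucc k).le

theorem IsOK.isFlexible (hbot : ⊥ ∉ U) (hinc : Aleph1Incomplete U) (hOK : IsOK U ι) :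
    IsFlexible U ι := by
  refine ⟨hinc, fun nm hnm hns => ?_⟩
  have hdist : IsDistribution fun s : Finset ι => nameGe nm s.card :=
    ⟨fun s hs => hbot (hs ▸ hns s.card), hnm.nameGe_zero,
      fun s t hts => nameGe_antitone nm (Finset.card_le_card hts)⟩
  exact hOK _ hdist (fun s => hns s.card) fun s t hst => by rw [hst]

theorem IsFlexible.isOK (htop : ⊤ ∈ U) (hup : ∀ a ∈ U, ∀ b : B, a ≤ b → b ∈ U)
    (hinf : ∀ a ∈ U, ∀ b ∈ U, a ⊓ b ∈ U) (hflex : IsFlexible U ι) : IsOK U ι := by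
  intro A hA hAU hcard
  obtain ⟨c, hcU, hc, hc0, hcbot⟩ := hflex.1.exists_antitone_top htop
  set h := infCardLE A ⊓ c
  have hh : Antitone h := (infCardLE_antitone A).inf hc
  have h0 : h 0 = ⊤ := by simp [h, hA.infCardLE_zero, hc0]
  have hbot : ⨅ k, h k = ⊥ := bot_unique <| hcbot ▸ iInf_mono fun k => inf_le_right
  have hns : IsNonstandardName U (nameOfAntitone h) := fun m => by
    rw [nameGe_nameOfAntitone hh hbot]
    exact hinf _ (hA.infCardLE_mem hup hAU hcard m) _ (hcU m)
  obtain ⟨D, hD, hDU, hDmul, hDle⟩ := hflex.2 _ (isName_nameOfAntitone hh h0 hbot) hns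
  refine ⟨D, hD, hDU, hDmul, fun s => ?_⟩
  calc D s ≤ nameGe (nameOfAntitone h) s.card := hDle s
    _ = h s.card := nameGe_nameOfAntitone hh hbot _
    _ ≤ infCardLE A s.card := inf_le_left
    _ ≤ A s := infCardLE_le le_rfl

end Ultrafilters

theorem statement12_general {B : Type u} [CompleteBooleanAlgebra B] (U : Set B) (hU : IsUltra U)
    (hinc : Aleph1Incomplete U)
    (ι : Type u) :
    IsOK U ι ↔ IsFlexible U ι := by
  obtain ⟨htop, hbot, hup, hinf, -⟩ := hU
  exact ⟨fun hOK => hOK.isFlexible hbot hinc, fun hflex => hflex.isOK htop hup hinf⟩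

theorem statement12 {B : Type u} [CompleteBooleanAlgebra B] (U : Set B) (hU : IsUltra U)
    (hinc : Aleph1Incomplete U)
    (lam : Cardinal.{u}) (hlam : Cardinal.aleph0 ≤ lam)
    (ι : Type u) (hι : Cardinal.mk ι = lam) :
    IsOK U ι ↔ IsFlexible U ι :=
  statement12_general U hU hinc ι

end BA
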